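/- Let H be a complex Hilbert space and A a bounded linear operator on H. Then (1/4)·‖A*A + AA*‖ ≤ ω(A)² ≤ (1/2)·‖A*A + AA*‖. (Note that A*A = |A|² and AA* = |A*|².) -/

import Mathlib

/-!
Write `A = B + i C` with `B = ℜ A` and `C = ℑ A` self-adjoint, so that
`A† A + A A† = 2 (B² + C²)` and `⟪A x, x⟫ = ⟪B x, x⟫ - i ⟪C x, x⟫` with both inner products real.
For a unit vector `x` this gives
`|⟪A x, x⟫|² = ⟪B x, x⟫² + ⟪C x, x⟫² ≤ ‖B x‖² + ‖C x‖² = ⟪(B² + C²) x, x⟫ ≤ ‖B² + C²‖`,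
the upper bound. Conversely the norm of a self-adjoint operator is the supremum of its
Rayleigh quotients, and `|⟪B x, x⟫| = |Re ⟪A x, x⟫|`, so `‖B‖, ‖C‖ ≤ ω(A)` and
`‖B² + C²‖ ≤ ‖B‖² + ‖C‖² ≤ 2 ω(A)²`.
-/

/-- The numerical radius of a bounded linear operator on a complex Hilbert space:
`ω(A) = sup { ‖⟨Ax, x⟩‖ : ‖x‖ = 1 }`. -/
noncomputable def numericalRadius {H : Type*} [NormedAddCommGroup H] [InnerProductSpace ℂ H]
    [CompleteSpace H] (A : H →L[ℂ] H) : ℝ :=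
  ⨆ x : {x : H // ‖x‖ = 1}, ‖(inner ℂ (A x) (x : H) : ℂ)‖

open ComplexStarModule Complex ContinuousLinearMap

section

variable {𝕜 E : Type*} [RCLike 𝕜] [NormedAddCommGroup E] [InnerProductSpace 𝕜 E]

lemma ContinuousLinearMap.opNorm_le_of_abs_re_inner_self_le {T : E →L[𝕜] E}
    (hT : (T : E →ₗ[𝕜] E).IsSymmetric) {M : ℝ} (hM : 0 ≤ M)
    (h : ∀ x, |RCLike.re (inner 𝕜 (T x) x)| ≤ M * ‖x‖ ^ 2) : ‖T‖ ≤ M := by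
  rw [T.norm_eq_iSup_rayleighQuotient hT]
  refine Real.iSup_le (fun x => ?_) hM
  rw [rayleighQuotient, reApplyInnerSelf_apply, abs_div, abs_sq]
  exact div_le_of_le_mul₀ (by positivity) hM (h x)

lemma sq_re_inner_apply_self_le (T : E →L[𝕜] E) {x : E} (hx : ‖x‖ = 1) :
    RCLike.re (inner 𝕜 (T x) x) ^ 2 ≤ ‖T x‖ ^ 2 := by
  have h := (RCLike.abs_re_le_norm _).trans (norm_inner_le_norm (𝕜 := 𝕜) (T x) x)
  rw [hx, mul_one] at h
  exact sq_le_sq.2 (h.trans (le_abs_self _))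

lemma re_inner_apply_self_le_opNorm (T : E →L[𝕜] E) {x : E} (hx : ‖x‖ = 1) :
    RCLike.re (inner 𝕜 (T x) x) ≤ ‖T‖ := by
  simpa [rayleighQuotient, reApplyInnerSelf_apply, hx] using
    (le_abs_self _).trans (T.rayleighQuotient_le_norm x)

lemma IsSelfAdjoint.re_inner_mul_self_apply_self [CompleteSpace E] {T : E →L[𝕜] E}
    (hT : IsSelfAdjoint T) (x : E) : RCLike.re (inner 𝕜 ((T * T) x) x) = ‖T x‖ ^ 2 := by
  rw [mul_apply_eq_comp, ← adjoint_inner_right, hT.adjoint_eq, inner_self_eq_norm_sq]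

end

section

variable {H : Type*} [NormedAddCommGroup H] [InnerProductSpace ℂ H] [CompleteSpace H]

lemma numericalRadius_nonneg (A : H →L[ℂ] H) : 0 ≤ numericalRadius A :=
  Real.iSup_nonneg fun _ => norm_nonneg _

lemma numericalRadius_le {A : H →L[ℂ] H} {M : ℝ} (hM : 0 ≤ M)
    (h : ∀ x : H, ‖x‖ = 1 → ‖inner ℂ (A x) x‖ ≤ M) : numericalRadius A ≤ M :=
  Real.iSup_le (fun x => h x x.2) hM

lemma norm_inner_apply_self_le_numericalRadius_of_norm_eq_one (A : H →L[ℂ] H) {x : H}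
    (hx : ‖x‖ = 1) : ‖inner ℂ (A x) x‖ ≤ numericalRadius A := by
  refine le_ciSup (f := fun y : {y : H // ‖y‖ = 1} => ‖inner ℂ (A y) (y : H)‖) ⟨‖A‖, ?_⟩ ⟨x, hx⟩
  rintro _ ⟨y, rfl⟩
  simpa [y.2] using (norm_inner_le_norm (𝕜 := ℂ) (A y) y).trans
    (mul_le_mul_of_nonneg_right (A.le_opNorm y) (norm_nonneg _))

lemma norm_inner_apply_self_le_numericalRadius (A : H →L[ℂ] H) (x : H) :
    ‖inner ℂ (A x) x‖ ≤ numericalRadius A * ‖x‖ ^ 2 := by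
  rcases eq_or_ne x 0 with rfl | hx
  · simp
  set u := (‖x‖ : ℂ)⁻¹ • x
  have hu : ‖u‖ = 1 := by simp [u, norm_smul, hx]
  have hxu : x = (‖x‖ : ℂ) • u := by simp [u, smul_smul, hx]
  calc ‖inner ℂ (A x) x‖ = ‖inner ℂ (A u) u‖ * ‖x‖ ^ 2 := by
        conv_lhs => rw [hxu]
        simp only [map_smul, inner_smul_left, inner_smul_right, norm_mul, Complex.norm_conj,
          Complex.norm_real, norm_norm]
        ring
    _ ≤ numericalRadius A * ‖x‖ ^ 2 := by
        gcongr; exact norm_inner_apply_self_le_numericalRadius_of_norm_eq_one A hu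

lemma re_inner_realPart_apply_self (A : H →L[ℂ] H) (x : H) :
    re (inner ℂ ((ℜ A : H →L[ℂ] H) x) x) = re (inner ℂ (A x) x) := by
  rw [realPart_apply_coe, smul_apply, RCLike.real_smul_eq_coe_smul (K := ℂ),
    inner_smul_real_left, add_apply, inner_add_left, star_eq_adjoint, adjoint_inner_left,
    ← inner_conj_symm x (A x)]
  simp only [smul_re, add_re, conj_re, smul_eq_mul]
  ring

lemma re_inner_imaginaryPart_apply_self (A : H →L[ℂ] H) (x : H) :
    re (inner ℂ ((ℑ A : H →L[ℂ] H) x) x) = -im (inner ℂ (A x) x) := by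
  rw [imaginaryPart_apply_coe, smul_apply, smul_apply, RCLike.real_smul_eq_coe_smul (K := ℂ),
    inner_smul_left, inner_smul_real_left, sub_apply, inner_sub_left, star_eq_adjoint,
    adjoint_inner_left, ← inner_conj_symm x (A x)]
  simp only [mul_re, smul_re, sub_re, sub_im, smul_im, conj_re, conj_im, neg_re, neg_im, I_re,
    I_im, smul_eq_mul]
  ring

lemma norm_realPart_le_numericalRadius (A : H →L[ℂ] H) :
    ‖(ℜ A : H →L[ℂ] H)‖ ≤ numericalRadius A :=
  opNorm_le_of_abs_re_inner_self_le (ℜ A).2.isSymmetric (numericalRadius_nonneg A) fun x => by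
    rw [RCLike.re_to_complex, re_inner_realPart_apply_self]
    exact (abs_re_le_norm _).trans (norm_inner_apply_self_le_numericalRadius A x)

lemma norm_imaginaryPart_le_numericalRadius (A : H →L[ℂ] H) :
    ‖(ℑ A : H →L[ℂ] H)‖ ≤ numericalRadius A :=
  opNorm_le_of_abs_re_inner_self_le (ℑ A).2.isSymmetric (numericalRadius_nonneg A) fun x => by
    rw [RCLike.re_to_complex, re_inner_imaginaryPart_apply_self, abs_neg]
    exact (abs_im_le_norm _).trans (norm_inner_apply_self_le_numericalRadius A x)

lemma numericalRadius_sq_le_norm_realPart_sq_add_imaginaryPart_sq (A : H →L[ℂ] H) :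
    numericalRadius A ^ 2 ≤ ‖(ℜ A : H →L[ℂ] H) * ℜ A + ℑ A * ℑ A‖ := by
  set B := (ℜ A : H →L[ℂ] H)
  set C := (ℑ A : H →L[ℂ] H)
  suffices numericalRadius A ≤ √‖B * B + C * C‖ by
    simpa using pow_le_pow_left₀ (numericalRadius_nonneg A) this 2
  refine numericalRadius_le (Real.sqrt_nonneg _) fun x hx => Real.le_sqrt_of_sq_le ?_
  calc ‖inner ℂ (A x) x‖ ^ 2 = re (inner ℂ (B x) x) ^ 2 + re (inner ℂ (C x) x) ^ 2 := by
        rw [re_inner_realPart_apply_self, re_inner_imaginaryPart_apply_self, Complex.sq_norm,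
          normSq_apply]
        ring
    _ ≤ ‖B x‖ ^ 2 + ‖C x‖ ^ 2 :=
        add_le_add (sq_re_inner_apply_self_le (𝕜 := ℂ) B hx)
          (sq_re_inner_apply_self_le (𝕜 := ℂ) C hx)
    _ = re (inner ℂ ((B * B + C * C) x) x) := by
        rw [add_apply, inner_add_left, add_re, ← RCLike.re_to_complex, ← RCLike.re_to_complex,
          (ℜ A).2.re_inner_mul_self_apply_self, (ℑ A).2.re_inner_mul_self_apply_self]
    _ ≤ ‖B * B + C * C‖ := re_inner_apply_self_le_opNorm (𝕜 := ℂ) _ hx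

lemma norm_adjoint_mul_self_add_self_mul_adjoint (A : H →L[ℂ] H) :
    ‖adjoint A * A + A * adjoint A‖ = 2 * ‖(ℜ A : H →L[ℂ] H) * ℜ A + ℑ A * ℑ A‖ := by
  rw [← star_eq_adjoint, star_mul_self_add_self_mul_star, RCLike.norm_nsmul ℂ, nsmul_eq_mul,
    Nat.cast_ofNat]

end

theorem quarter_norm_le_numericalRadius_sq_le_half_norm
    {H : Type*} [NormedAddCommGroup H] [InnerProductSpace ℂ H] [CompleteSpace H]
    (A : H →L[ℂ] H) :
    (1 / 4) * ‖ContinuousLinearMap.adjoint A * A + A * ContinuousLinearMap.adjoint A‖ ≤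
        numericalRadius A ^ 2 ∧
      numericalRadius A ^ 2 ≤
        (1 / 2) * ‖ContinuousLinearMap.adjoint A * A + A * ContinuousLinearMap.adjoint A‖ := by
  have hupper := numericalRadius_sq_le_norm_realPart_sq_add_imaginaryPart_sq A
  have hB := norm_realPart_le_numericalRadius A
  have hC := norm_imaginaryPart_le_numericalRadius A
  rw [norm_adjoint_mul_self_add_self_mul_adjoint]
  set B := (ℜ A : H →L[ℂ] H)
  set C := (ℑ A : H →L[ℂ] H)
  refine ⟨?_, by linarith⟩
  calc 1 / 4 * (2 * ‖B * B + C * C‖) ≤ (‖B‖ * ‖B‖ + ‖C‖ * ‖C‖) / 2 := by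
        linarith [norm_add_le (B * B) (C * C), norm_mul_le B B, norm_mul_le C C]
    _ ≤ (numericalRadius A * numericalRadius A + numericalRadius A * numericalRadius A) / 2 := by
        gcongr <;> exact numericalRadius_nonneg A
    _ = numericalRadius A ^ 2 := by ring
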